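/- arXiv:1902.02254 — 3 statements merged into one kernel-verified Lean document; each statement's English description precedes it below -/
import Mathlib

section
/- Let (u,v) and (ū,v̄) both be canonical principal parameters for the same surface without umbilical points (with the same orientation of principal directions). Then the change of parameters is affine: ū = λu + c₁ and v̄ = μv + c₂ for some nonzero constants λ, μ and constants c₁, c₂. -/
noncomputable def pd1 (f : ℝ → ℝ → ℝ) (u v : ℝ) : ℝ := deriv (fun x => f x v) u
noncomputable def pd2 (f : ℝ → ℝ → ℝ) (u v : ℝ) : ℝ := deriv (fun y => f u y) v

lemma slice1 (F : ℝ → ℝ → ℝ) (hF : ContDiff ℝ (⊤ : ℕ∞) (Function.uncurry F)) (b : ℝ) :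
    ContDiff ℝ (⊤ : ℕ∞) (fun x => F x b) :=
  hF.comp (ContDiff.prodMk contDiff_id contDiff_const)

lemma slice2 (F : ℝ → ℝ → ℝ) (hF : ContDiff ℝ (⊤ : ℕ∞) (Function.uncurry F)) (a : ℝ) :
    ContDiff ℝ (⊤ : ℕ∞) (fun y => F a y) :=
  hF.comp (ContDiff.prodMk contDiff_const contDiff_id)

lemma deriv_comp'' (f g : ℝ → ℝ) (hf : ContDiff ℝ (⊤ : ℕ∞) f) (hg : ContDiff ℝ (⊤ : ℕ∞) g) (u : ℝ) :
    deriv (fun x => f (g x)) u = deriv f (g u) * deriv g u :=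
  deriv_comp u ((hf.differentiable (by simp)) (g u)) ((hg.differentiable (by simp)) u)

lemma deriv2_diff (φ : ℝ → ℝ) (hφ : ContDiff ℝ (⊤ : ℕ∞) φ) : Differentiable ℝ (deriv φ) :=
  ((contDiff_infty_iff_deriv.mp (hφ.of_le (by simp))).2).differentiable (by simp)

lemma affine_of_deriv2 (φ : ℝ → ℝ) (hφ : ContDiff ℝ (⊤ : ℕ∞) φ) (hφ0 : deriv φ 0 ≠ 0)
    (h2 : ∀ u, deriv (deriv φ) u = 0) :
    ∃ lam c : ℝ, lam ≠ 0 ∧ ∀ u, φ u = lam * u + c := by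
  have hd : Differentiable ℝ φ := hφ.differentiable (by simp)
  have hd' : Differentiable ℝ (deriv φ) := deriv2_diff φ hφ
  have hconst : ∀ u, deriv φ u = deriv φ 0 := fun u =>
    is_const_of_deriv_eq_zero hd' h2 u 0
  refine ⟨deriv φ 0, φ 0, hφ0, fun u => ?_⟩
  have hg : ∀ x, deriv (fun t => φ t - deriv φ 0 * t) x = 0 := by
    intro x
    have h1 : HasDerivAt (fun t => φ t - deriv φ 0 * t) (deriv φ x - deriv φ 0 * 1) x :=
      (hd x).hasDerivAt.sub ((hasDerivAt_id x).const_mul (deriv φ 0))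
    rw [h1.deriv, hconst x]; ring
  have hgd : Differentiable ℝ (fun t => φ t - deriv φ 0 * t) :=
    hd.sub (differentiable_id.const_mul _)
  have := is_const_of_deriv_eq_zero hgd hg u 0
  simp at this
  linarith

lemma main1d (φ A r : ℝ → ℝ) (hφ : ContDiff ℝ (⊤ : ℕ∞) φ) (hφ' : ∀ u, deriv φ u ≠ 0)
    (hA : Differentiable ℝ A) (hApos : ∀ u, 0 < A u)
    (hA' : ∀ u, deriv A u = A u * r u)
    (he' : ∀ u, deriv (fun x => A x * (deriv φ x) ^ 2) u = (A u * (deriv φ u) ^ 2) * r u) :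
    ∃ lam c : ℝ, lam ≠ 0 ∧ ∀ u, φ u = lam * u + c := by
  have hd' : Differentiable ℝ (deriv φ) := deriv2_diff φ hφ
  apply affine_of_deriv2 φ hφ (hφ' 0)
  intro u
  have h1 : HasDerivAt (deriv φ) (deriv (deriv φ) u) u := (hd' u).hasDerivAt
  have h2 : HasDerivAt (fun x => (deriv φ x) ^ 2)
      ((2 : ℕ) * (deriv φ u) ^ 1 * deriv (deriv φ) u) u := h1.pow 2
  have h3 : HasDerivAt (fun x => A x * (deriv φ x) ^ 2)
      (deriv A u * (deriv φ u) ^ 2 + A u * ((2 : ℕ) * (deriv φ u) ^ 1 * deriv (deriv φ) u)) u :=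
    (hA u).hasDerivAt.mul h2
  have h4 := h3.deriv
  rw [he' u, hA' u] at h4
  have h5 : A u * (2 * deriv φ u * deriv (deriv φ) u) = 0 := by
    push_cast at h4
    nlinarith [h4]
  rcases mul_eq_zero.mp h5 with h | h
  · exact absurd h (hApos u).ne'
  · rcases mul_eq_zero.mp h with h' | h'
    · exact absurd h' (by simpa using hφ' u)
    · exact h'


/-- If (u,v) and (ū,v̄) = (φ(u), ψ(v)) are both canonical principal
parameters for the same surface (same orientation of principal directions, so the
change is diagonal: ū depends on u only and v̄ on v only, and the principal
curvatures and first fundamental form transform accordingly), then the change of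
parameters is affine: φ(u) = λu + c₁, ψ(v) = μv + c₂ with λ, μ ≠ 0.
Canonicity is expressed by the differential identities satisfied by E, G:
E_v/(2E) = -(ν₁)_v/(ν₁-ν₂) everywhere, E_u/(2E) = -(ν₁)_u/(ν₁-ν₂) on v = v₀,
G_u/(2G) = (ν₂)_u/(ν₁-ν₂) everywhere, G_v/(2G) = (ν₂)_v/(ν₁-ν₂) on u = u₀,
and likewise for the barred quantities with base point (φ(u₀), ψ(v₀)). -/
theorem stmt6
    (E G ν₁ ν₂ Eb Gb νb₁ νb₂ : ℝ → ℝ → ℝ) (φ ψ : ℝ → ℝ) (u₀ v₀ : ℝ)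
    (hE : ContDiff ℝ (⊤ : ℕ∞) (Function.uncurry E)) (hG : ContDiff ℝ (⊤ : ℕ∞) (Function.uncurry G))
    (hEb : ContDiff ℝ (⊤ : ℕ∞) (Function.uncurry Eb)) (hGb : ContDiff ℝ (⊤ : ℕ∞) (Function.uncurry Gb))
    (hν₁ : ContDiff ℝ (⊤ : ℕ∞) (Function.uncurry ν₁)) (hν₂ : ContDiff ℝ (⊤ : ℕ∞) (Function.uncurry ν₂))
    (hνb₁ : ContDiff ℝ (⊤ : ℕ∞) (Function.uncurry νb₁)) (hνb₂ : ContDiff ℝ (⊤ : ℕ∞) (Function.uncurry νb₂))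
    (hφ : ContDiff ℝ (⊤ : ℕ∞) φ) (hψ : ContDiff ℝ (⊤ : ℕ∞) ψ)
    (hφ' : ∀ u, deriv φ u ≠ 0) (hψ' : ∀ v, deriv ψ v ≠ 0)
    (hEpos : ∀ u v, 0 < E u v) (hGpos : ∀ u v, 0 < G u v)
    (hEbpos : ∀ u v, 0 < Eb u v) (hGbpos : ∀ u v, 0 < Gb u v)
    (hne : ∀ u v, ν₁ u v - ν₂ u v ≠ 0) (hbne : ∀ u v, νb₁ u v - νb₂ u v ≠ 0)
    -- the reparametrization: invariance of principal curvatures and of the metric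
    (hrel₁ : ∀ u v, νb₁ (φ u) (ψ v) = ν₁ u v)
    (hrel₂ : ∀ u v, νb₂ (φ u) (ψ v) = ν₂ u v)
    (hrelE : ∀ u v, Eb (φ u) (ψ v) * (deriv φ u) ^ 2 = E u v)
    (hrelG : ∀ u v, Gb (φ u) (ψ v) * (deriv ψ v) ^ 2 = G u v)
    -- (u,v) are canonical principal parameters with base point (u₀,v₀)
    (hc1 : ∀ u v, pd2 E u v / (2 * E u v) = -(pd2 ν₁ u v) / (ν₁ u v - ν₂ u v))
    (hc2 : ∀ u, pd1 E u v₀ / (2 * E u v₀) = -(pd1 ν₁ u v₀) / (ν₁ u v₀ - ν₂ u v₀))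
    (hc3 : ∀ u v, pd1 G u v / (2 * G u v) = pd1 ν₂ u v / (ν₁ u v - ν₂ u v))
    (hc4 : ∀ v, pd2 G u₀ v / (2 * G u₀ v) = pd2 ν₂ u₀ v / (ν₁ u₀ v - ν₂ u₀ v))
    -- (ū,v̄) are canonical principal parameters with base point (φ(u₀), ψ(v₀))
    (hb1 : ∀ u v, pd2 Eb u v / (2 * Eb u v) = -(pd2 νb₁ u v) / (νb₁ u v - νb₂ u v))
    (hb2 : ∀ u, pd1 Eb u (ψ v₀) / (2 * Eb u (ψ v₀)) =
      -(pd1 νb₁ u (ψ v₀)) / (νb₁ u (ψ v₀) - νb₂ u (ψ v₀)))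
    (hb3 : ∀ u v, pd1 Gb u v / (2 * Gb u v) = pd1 νb₂ u v / (νb₁ u v - νb₂ u v))
    (hb4 : ∀ v, pd2 Gb (φ u₀) v / (2 * Gb (φ u₀) v) =
      pd2 νb₂ (φ u₀) v / (νb₁ (φ u₀) v - νb₂ (φ u₀) v)) :
    (∃ lam c₁ : ℝ, lam ≠ 0 ∧ ∀ u, φ u = lam * u + c₁) ∧
    (∃ mu c₂ : ℝ, mu ≠ 0 ∧ ∀ v, ψ v = mu * v + c₂) := by
  constructor
  · -- φ direction
    set A : ℝ → ℝ := fun u => Eb (φ u) (ψ v₀) with hAdef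
    set r : ℝ → ℝ := fun u => -2 * pd1 ν₁ u v₀ / (ν₁ u v₀ - ν₂ u v₀) with hrdef
    have hAc : ContDiff ℝ (⊤ : ℕ∞) A := (slice1 Eb hEb (ψ v₀)).comp hφ
    apply main1d φ A r hφ hφ' (hAc.differentiable (by simp)) (fun u => hEbpos _ _)
    · -- hA'
      intro u
      have hch : deriv A u = pd1 Eb (φ u) (ψ v₀) * deriv φ u :=
        deriv_comp'' (fun x => Eb x (ψ v₀)) φ (slice1 Eb hEb (ψ v₀)) hφ u
      have hfun : (fun x => νb₁ (φ x) (ψ v₀)) = (fun x => ν₁ x v₀) :=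
        funext fun x => hrel₁ x v₀
      have hnch : pd1 νb₁ (φ u) (ψ v₀) * deriv φ u = pd1 ν₁ u v₀ := by
        have := deriv_comp'' (fun x => νb₁ x (ψ v₀)) φ (slice1 νb₁ hνb₁ (ψ v₀)) hφ u
        rw [hfun] at this
        exact this.symm
      have hb := hb2 (φ u)
      rw [hrel₁ u v₀, hrel₂ u v₀] at hb
      have hD := hne u v₀
      have hW : (0:ℝ) < Eb (φ u) (ψ v₀) := hEbpos _ _
      rw [hch, hrdef]
      simp only [hAdef]
      field_simp at hb ⊢
      linear_combination deriv φ u * hb - 2 * Eb (φ u) (ψ v₀) * hnch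
    · -- he'
      intro u
      have hfunE : (fun x => A x * (deriv φ x) ^ 2) = (fun x => E x v₀) :=
        funext fun x => hrelE x v₀
      rw [hfunE]
      have hc := hc2 u
      have hD := hne u v₀
      have hEp : (0:ℝ) < E u v₀ := hEpos u v₀
      have hAE : A u * (deriv φ u) ^ 2 = E u v₀ := hrelE u v₀
      show pd1 E u v₀ = _
      rw [hAE, hrdef]
      field_simp at hc ⊢
      nlinarith [hc]
  · -- ψ direction
    set A : ℝ → ℝ := fun v => Gb (φ u₀) (ψ v) with hAdef
    set r : ℝ → ℝ := fun v => 2 * pd2 ν₂ u₀ v / (ν₁ u₀ v - ν₂ u₀ v) with hrdef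
    have hAc : ContDiff ℝ (⊤ : ℕ∞) A := (slice2 Gb hGb (φ u₀)).comp hψ
    apply main1d ψ A r hψ hψ' (hAc.differentiable (by simp)) (fun v => hGbpos _ _)
    · intro v
      have hch : deriv A v = pd2 Gb (φ u₀) (ψ v) * deriv ψ v :=
        deriv_comp'' (fun y => Gb (φ u₀) y) ψ (slice2 Gb hGb (φ u₀)) hψ v
      have hfun : (fun y => νb₂ (φ u₀) (ψ y)) = (fun y => ν₂ u₀ y) :=
        funext fun y => hrel₂ u₀ y
      have hnch : pd2 νb₂ (φ u₀) (ψ v) * deriv ψ v = pd2 ν₂ u₀ v := by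
        have := deriv_comp'' (fun y => νb₂ (φ u₀) y) ψ (slice2 νb₂ hνb₂ (φ u₀)) hψ v
        rw [hfun] at this
        exact this.symm
      have hb := hb4 (ψ v)
      rw [hrel₁ u₀ v, hrel₂ u₀ v] at hb
      have hD := hne u₀ v
      have hW : (0:ℝ) < Gb (φ u₀) (ψ v) := hGbpos _ _
      rw [hch, hrdef]
      simp only [hAdef]
      field_simp at hb ⊢
      linear_combination deriv ψ v * hb + 2 * Gb (φ u₀) (ψ v) * hnch
    · intro v
      have hfunG : (fun y => A y * (deriv ψ y) ^ 2) = (fun y => G u₀ y) :=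
        funext fun y => hrelG u₀ y
      rw [hfunG]
      have hc := hc4 v
      have hD := hne u₀ v
      have hGp : (0:ℝ) < G u₀ v := hGpos u₀ v
      have hAG : A v * (deriv ψ v) ^ 2 = G u₀ v := hrelG u₀ v
      show pd2 G u₀ v = _
      rw [hAG, hrdef]
      field_simp at hc ⊢
      nlinarith [hc]
end

section
/- With E = a·Ψ₁² and G = b·Ψ₂² as above, the orthogonal-parameter Gauss equation ν₁ν₂ = -1/(2√(EG))·[(E_v/√(EG))_v + (G_u/√(EG))_u] is equivalent to the equation ν₁ν₂·Ψ₁Ψ₂ = (1/b)·∂_v[ ((ν₁)_v/(ν₁-ν₂))·Ψ₁/Ψ₂ ] - (1/a)·∂_u[ ((ν₂)_u/(ν₁-ν₂))·Ψ₂/Ψ₁ ]. -/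
/-- With E = a·Ψ₁², G = b·Ψ₂² built from ν₁, ν₂ by the canonical
construction, the orthogonal-parameter Gauss equation
ν₁ν₂ = -1/(2√(EG))·[(E_v/√(EG))_v + (G_u/√(EG))_u]
is equivalent to
ν₁ν₂Ψ₁Ψ₂ = (1/b)·∂_v[((ν₁)_v/(ν₁-ν₂))·Ψ₁/Ψ₂] - (1/a)·∂_u[((ν₂)_u/(ν₁-ν₂))·Ψ₂/Ψ₁]. -/
theorem stmt10 (ν₁ ν₂ : ℝ → ℝ → ℝ) (u₀ v₀ a b : ℝ) (ha : 0 < a) (hb : 0 < b)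
    (hν₁ : ContDiff ℝ (⊤ : ℕ∞) (Function.uncurry ν₁))
    (hν₂ : ContDiff ℝ (⊤ : ℕ∞) (Function.uncurry ν₂))
    (hne : ∀ u v, ν₁ u v - ν₂ u v ≠ 0)
    (Ψ₁ Ψ₂ E G : ℝ → ℝ → ℝ)
    (hΨ₁ : ∀ u v, Ψ₁ u v = Real.exp
      (-(∫ t in v₀..v, pd2 ν₁ u t / (ν₁ u t - ν₂ u t)) -
        ∫ s in u₀..u, pd1 ν₁ s v₀ / (ν₁ s v₀ - ν₂ s v₀)))
    (hΨ₂ : ∀ u v, Ψ₂ u v = Real.exp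
      ((∫ s in u₀..u, pd1 ν₂ s v / (ν₁ s v - ν₂ s v)) +
        ∫ t in v₀..v, pd2 ν₂ u₀ t / (ν₁ u₀ t - ν₂ u₀ t)))
    (hEdef : ∀ u v, E u v = a * (Ψ₁ u v) ^ 2)
    (hGdef : ∀ u v, G u v = b * (Ψ₂ u v) ^ 2)
    (u v : ℝ) :
    (ν₁ u v * ν₂ u v =
        -(1 / (2 * Real.sqrt (E u v * G u v))) *
          (pd2 (fun p q => pd2 E p q / Real.sqrt (E p q * G p q)) u v +
           pd1 (fun p q => pd1 G p q / Real.sqrt (E p q * G p q)) u v)) ↔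
    (ν₁ u v * ν₂ u v * Ψ₁ u v * Ψ₂ u v =
        (1 / b) * pd2 (fun p q => pd2 ν₁ p q / (ν₁ p q - ν₂ p q) * (Ψ₁ p q / Ψ₂ p q)) u v -
        (1 / a) * pd1 (fun p q => pd1 ν₂ p q / (ν₁ p q - ν₂ p q) * (Ψ₂ p q / Ψ₁ p q)) u v) := by
  have hΨ₁pos : ∀ p q, 0 < Ψ₁ p q := fun p q => (hΨ₁ p q) ▸ Real.exp_pos _
  have hΨ₂pos : ∀ p q, 0 < Ψ₂ p q := fun p q => (hΨ₂ p q) ▸ Real.exp_pos _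
  set g : ℝ → ℝ → ℝ := fun p q => pd2 ν₁ p q / (ν₁ p q - ν₂ p q) with hgdef
  set h : ℝ → ℝ → ℝ := fun p q => pd1 ν₂ p q / (ν₁ p q - ν₂ p q) with hhdef
  -- continuity of the integrands
  have hgcont : ∀ p, Continuous (fun t => g p t) := by
    intro p
    have h1 : ContDiff ℝ (⊤ : ℕ∞) (fun y : ℝ => ν₁ p y) :=
      hν₁.comp (ContDiff.prodMk contDiff_const contDiff_id : ContDiff ℝ (⊤ : ℕ∞) (fun y : ℝ => ((p, y) : ℝ × ℝ)))
    have h2 : ContDiff ℝ (⊤ : ℕ∞) (fun y : ℝ => ν₂ p y) :=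
      hν₂.comp (ContDiff.prodMk contDiff_const contDiff_id : ContDiff ℝ (⊤ : ℕ∞) (fun y : ℝ => ((p, y) : ℝ × ℝ)))
    have c1 : Continuous (fun t => pd2 ν₁ p t) := by
      simpa [pd2] using h1.continuous_deriv (by simp)
    exact c1.div (h1.continuous.sub h2.continuous) (fun t => hne p t)
  have hhcont : ∀ q, Continuous (fun s => h s q) := by
    intro q
    have h1 : ContDiff ℝ (⊤ : ℕ∞) (fun x : ℝ => ν₁ x q) :=
      hν₁.comp (ContDiff.prodMk contDiff_id contDiff_const : ContDiff ℝ (⊤ : ℕ∞) (fun x : ℝ => ((x, q) : ℝ × ℝ)))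
    have h2 : ContDiff ℝ (⊤ : ℕ∞) (fun x : ℝ => ν₂ x q) :=
      hν₂.comp (ContDiff.prodMk contDiff_id contDiff_const : ContDiff ℝ (⊤ : ℕ∞) (fun x : ℝ => ((x, q) : ℝ × ℝ)))
    have c1 : Continuous (fun s => pd1 ν₂ s q) := by
      simpa [pd1] using h2.continuous_deriv (by simp)
    exact c1.div (h1.continuous.sub h2.continuous) (fun s => hne s q)
  -- derivative of Ψ₁ in the second variable
  have hΨ₁d : ∀ p q, HasDerivAt (fun y => Ψ₁ p y) (-(g p q) * Ψ₁ p q) q := by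
    intro p q
    have hI : HasDerivAt (fun y => ∫ t in v₀..y, g p t) (g p q) q :=
      ((hgcont p).integral_hasStrictDerivAt v₀ q).hasDerivAt
    have hF : HasDerivAt
        (fun y => -(∫ t in v₀..y, g p t) - ∫ s in u₀..p, pd1 ν₁ s v₀ / (ν₁ s v₀ - ν₂ s v₀))
        (-(g p q)) q := (hI.neg).sub_const _
    have := hF.exp
    have heq : (fun y => Real.exp
        (-(∫ t in v₀..y, g p t) - ∫ s in u₀..p, pd1 ν₁ s v₀ / (ν₁ s v₀ - ν₂ s v₀)))
        = fun y => Ψ₁ p y := by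
      funext y; rw [hΨ₁ p y]
    rw [heq] at this
    convert this using 1
    rw [hΨ₁ p q]
    ring
  -- derivative of Ψ₂ in the first variable
  have hΨ₂d : ∀ p q, HasDerivAt (fun x => Ψ₂ x q) (h p q * Ψ₂ p q) p := by
    intro p q
    have hI : HasDerivAt (fun x => ∫ s in u₀..x, h s q) (h p q) p :=
      ((hhcont q).integral_hasStrictDerivAt u₀ p).hasDerivAt
    have hF : HasDerivAt
        (fun x => (∫ s in u₀..x, h s q) + ∫ t in v₀..q, pd2 ν₂ u₀ t / (ν₁ u₀ t - ν₂ u₀ t))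
        (h p q) p := hI.add_const _
    have := hF.exp
    have heq : (fun x => Real.exp
        ((∫ s in u₀..x, h s q) + ∫ t in v₀..q, pd2 ν₂ u₀ t / (ν₁ u₀ t - ν₂ u₀ t)))
        = fun x => Ψ₂ x q := by
      funext x; rw [hΨ₂ x q]
    rw [heq] at this
    convert this using 1
    rw [hΨ₂ p q]
    ring
  -- sqrt of E*G
  have hab : (0:ℝ) < a * b := mul_pos ha hb
  have hS : (0:ℝ) < Real.sqrt (a * b) := Real.sqrt_pos.mpr hab
  have hsq : ∀ p q, Real.sqrt (E p q * G p q)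
      = Real.sqrt (a * b) * (Ψ₁ p q * Ψ₂ p q) := by
    intro p q
    rw [hEdef, hGdef]
    have : a * Ψ₁ p q ^ 2 * (b * Ψ₂ p q ^ 2) = (a * b) * (Ψ₁ p q * Ψ₂ p q) ^ 2 := by ring
    rw [this, Real.sqrt_mul hab.le, Real.sqrt_sq (mul_pos (hΨ₁pos p q) (hΨ₂pos p q)).le]
  -- pd2 E
  have hEv : ∀ p q, pd2 E p q = 2 * a * Ψ₁ p q * (-(g p q) * Ψ₁ p q) := by
    intro p q
    have heq : (fun y => E p y) = fun y => a * Ψ₁ p y ^ 2 := funext fun y => hEdef p y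
    have hd : HasDerivAt (fun y => a * Ψ₁ p y ^ 2)
        (a * ((2:ℕ) * Ψ₁ p q ^ 1 * (-(g p q) * Ψ₁ p q))) q :=
      ((hΨ₁d p q).pow 2).const_mul a
    rw [pd2, heq, hd.deriv]
    push_cast
    ring
  have hGu : ∀ p q, pd1 G p q = 2 * b * Ψ₂ p q * (h p q * Ψ₂ p q) := by
    intro p q
    have heq : (fun x => G x q) = fun x => b * Ψ₂ x q ^ 2 := funext fun x => hGdef x q
    have hd : HasDerivAt (fun x => b * Ψ₂ x q ^ 2)
        (b * ((2:ℕ) * Ψ₂ p q ^ 1 * (h p q * Ψ₂ p q))) p :=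
      ((hΨ₂d p q).pow 2).const_mul b
    rw [pd1, heq, hd.deriv]
    push_cast
    ring
  -- the inner functions agree up to constants
  have hSne : Real.sqrt (a * b) ≠ 0 := ne_of_gt hS
  have hinner1 : ∀ p q, pd2 E p q / Real.sqrt (E p q * G p q)
      = (-2 * a / Real.sqrt (a * b)) * (g p q * (Ψ₁ p q / Ψ₂ p q)) := by
    intro p q
    rw [hEv, hsq]
    have h1 := (hΨ₁pos p q).ne'
    have h2 := (hΨ₂pos p q).ne'
    field_simp
  have hinner2 : ∀ p q, pd1 G p q / Real.sqrt (E p q * G p q)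
      = (2 * b / Real.sqrt (a * b)) * (h p q * (Ψ₂ p q / Ψ₁ p q)) := by
    intro p q
    rw [hGu, hsq]
    have h1 := (hΨ₁pos p q).ne'
    have h2 := (hΨ₂pos p q).ne'
    field_simp
  -- pull the constants out of the outer derivatives
  have hL1 : pd2 (fun p q => pd2 E p q / Real.sqrt (E p q * G p q)) u v
      = (-2 * a / Real.sqrt (a * b)) *
        pd2 (fun p q => g p q * (Ψ₁ p q / Ψ₂ p q)) u v := by
    rw [pd2, pd2]
    have heq : (fun q => pd2 E u q / Real.sqrt (E u q * G u q))
        = fun q => (-2 * a / Real.sqrt (a * b)) * (g u q * (Ψ₁ u q / Ψ₂ u q)) :=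
      funext fun q => hinner1 u q
    rw [heq, deriv_const_mul_field]
  have hL2 : pd1 (fun p q => pd1 G p q / Real.sqrt (E p q * G p q)) u v
      = (2 * b / Real.sqrt (a * b)) *
        pd1 (fun p q => h p q * (Ψ₂ p q / Ψ₁ p q)) u v := by
    rw [pd1, pd1]
    have heq : (fun p => pd1 G p v / Real.sqrt (E p v * G p v))
        = fun p => (2 * b / Real.sqrt (a * b)) * (h p v * (Ψ₂ p v / Ψ₁ p v)) :=
      funext fun p => hinner2 p v
    rw [heq, deriv_const_mul_field]
  -- final algebra
  rw [hL1, hL2, hsq u v]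
  set Dv := pd2 (fun p q => g p q * (Ψ₁ p q / Ψ₂ p q)) u v with hDv
  set Du := pd1 (fun p q => h p q * (Ψ₂ p q / Ψ₁ p q)) u v with hDu
  have hP : Ψ₁ u v * Ψ₂ u v ≠ 0 :=
    ne_of_gt (mul_pos (hΨ₁pos u v) (hΨ₂pos u v))
  have hS2 : Real.sqrt (a * b) * Real.sqrt (a * b) = a * b :=
    Real.mul_self_sqrt hab.le
  have key : ∀ S : ℝ, S ≠ 0 → S * S = a * b →
      -(1 / (2 * (S * (Ψ₁ u v * Ψ₂ u v)))) *
      ((-2 * a / S) * Dv + (2 * b / S) * Du)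
      = (1 / b * Dv - 1 / a * Du) / (Ψ₁ u v * Ψ₂ u v) := by
    intro S hS0 hSS
    have h1 := (hΨ₁pos u v).ne'
    have h2 := (hΨ₂pos u v).ne'
    field_simp
    linear_combination (b * Du - a * Dv) * hSS
  rw [key _ hSne hS2, eq_div_iff hP]
  constructor <;> intro H <;> linear_combination H
end

section
/- For a Weingarten surface with ν₁ = f(ν), ν₂ = g(ν) in canonical principal parameters, the canonical Gauss equation ν₁ν₂Ψ₁Ψ₂ = (1/b)∂_v[((ν₁)_v/(ν₁-ν₂))Ψ₁/Ψ₂] - (1/a)∂_u[((ν₂)_u/(ν₁-ν₂))Ψ₂/Ψ₁] is equivalent to A·{f'·ν_{vv} + (f'' - 2f'²/(f-g))·ν_v²}·exp(2∫_{ν₀}^{ν} g'/(g-f) dt) - B·{g'·ν_{uu} + (g'' + 2g'²/(f-g))·ν_u²}·exp(2∫_{ν₀}^{ν} f'/(f-g) dt) = f·g·(f-g), for suitable positive constants A, B depending on a, b. -/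
open intervalIntegral Real
open scoped ContDiff

private lemma ftc1' {h : ℝ → ℝ} (hh : Continuous h) (c₀ : ℝ) (y : ℝ) :
    HasDerivAt (fun x => ∫ t in c₀..x, h t) (h y) y :=
  intervalIntegral.integral_hasDerivAt_right (hh.intervalIntegrable _ _)
    (hh.stronglyMeasurableAtFilter _ _) hh.continuousAt

private lemma ftc2' {w w' : ℝ → ℝ} (hcont : Continuous w')
    (hderiv : ∀ x, HasDerivAt w (w' x) x) (a b : ℝ) :
    ∫ t in a..b, w' t = w b - w a :=
  intervalIntegral.integral_eq_sub_of_hasDerivAt (fun x _ => hderiv x)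
    (hcont.intervalIntegrable _ _)

private lemma keyint' {F φ : ℝ → ℝ} (hF : ∀ y, HasDerivAt F (φ y) y) (hφ : Continuous φ)
    {c : ℝ → ℝ} (hc : ContDiff ℝ ∞ c) (p q : ℝ) :
    ∫ t in p..q, φ (c t) * deriv c t = F (c q) - F (c p) := by
  have hdc : Continuous (deriv c) := ((contDiff_infty_iff_deriv.mp hc).2).continuous
  exact ftc2' (w := fun t => F (c t)) ((hφ.comp hc.continuous).mul hdc)
    (fun x => (hF (c x)).comp x ((hc.differentiable (by norm_num) x).hasDerivAt)) p q

private lemma sec2_smooth {ν : ℝ → ℝ → ℝ} (hν : ContDiff ℝ ∞ (Function.uncurry ν)) (u : ℝ) :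
    ContDiff ℝ ∞ (fun y => ν u y) := hν.comp (f := fun y => (u, y)) (ContDiff.prodMk (contDiff_const (c := u)) contDiff_id)

private lemma sec1_smooth {ν : ℝ → ℝ → ℝ} (hν : ContDiff ℝ ∞ (Function.uncurry ν)) (v : ℝ) :
    ContDiff ℝ ∞ (fun x => ν x v) := hν.comp (f := fun x => (x, v)) (ContDiff.prodMk contDiff_id (contDiff_const (c := v)))

private lemma pd2_comp {h : ℝ → ℝ} (hh : Differentiable ℝ h) {ν : ℝ → ℝ → ℝ}
    (hν : ContDiff ℝ ∞ (Function.uncurry ν)) {w : ℝ → ℝ → ℝ}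
    (hw : ∀ u v, w u v = h (ν u v)) (u t : ℝ) :
    pd2 w u t = deriv h (ν u t) * pd2 ν u t := by
  have he : (fun y => w u y) = fun y => h (ν u y) := funext fun y => hw u y
  show deriv (fun y => w u y) t = _
  rw [he]
  exact (hh.differentiableAt.hasDerivAt.comp t
    (((sec2_smooth hν u).differentiable (by norm_num)) t).hasDerivAt).deriv

private lemma pd1_comp {h : ℝ → ℝ} (hh : Differentiable ℝ h) {ν : ℝ → ℝ → ℝ}
    (hν : ContDiff ℝ ∞ (Function.uncurry ν)) {w : ℝ → ℝ → ℝ}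
    (hw : ∀ u v, w u v = h (ν u v)) (s v : ℝ) :
    pd1 w s v = deriv h (ν s v) * pd1 ν s v := by
  have he : (fun x => w x v) = fun x => h (ν x v) := funext fun x => hw x v
  show deriv (fun x => w x v) s = _
  rw [he]
  exact (hh.differentiableAt.hasDerivAt.comp s
    (((sec1_smooth hν v).differentiable (by norm_num)) s).hasDerivAt).deriv

private lemma key_alg (a b x1 x2 pp qq pp2 qq2 n1 n2 m1 m2 EP EQ : ℝ)
    (hx : x1 - x2 ≠ 0) (hEP : EP ≠ 0) (hEQ : EQ ≠ 0) (ha' : a ≠ 0) (hb' : b ≠ 0) :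
    1 / b * (pp * m2 + (pp2 - 2 * pp ^ 2 / (x1 - x2)) * n2 ^ 2) * (EQ⁻¹ * EQ⁻¹) -
        1 / a * (qq * m1 + (qq2 + 2 * qq ^ 2 / (x1 - x2)) * n1 ^ 2) * (EP * EP) -
        x1 * x2 * (x1 - x2) =
      (x1 - x2) * EP / EQ *
        ((1 / b * ((pp * m2 + (pp2 - 2 * pp ^ 2 / (x1 - x2)) * n2 ^ 2) / (x1 - x2) *
            (EP⁻¹ * EQ⁻¹)) -
          1 / a * ((qq * m1 + (qq2 + 2 * qq ^ 2 / (x1 - x2)) * n1 ^ 2) / (x1 - x2) *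
            (EQ * EP))) - x1 * x2 * EP⁻¹ * EQ) := by
  field_simp

/-- For a Weingarten surface with ν₁ = f∘ν, ν₂ = g∘ν in canonical
principal parameters, the canonical Gauss equation
ν₁ν₂Ψ₁Ψ₂ = (1/b)∂_v[((ν₁)_v/(ν₁-ν₂))Ψ₁/Ψ₂] - (1/a)∂_u[((ν₂)_u/(ν₁-ν₂))Ψ₂/Ψ₁]
is, for suitable positive constants A, B (depending on a, b), equivalent to
A·{f'ν_vv + (f'' - 2f'²/(f-g))ν_v²}·exp(2∫_{ν₀}^{ν} g'/(g-f))
 - B·{g'ν_uu + (g'' + 2g'²/(f-g))ν_u²}·exp(2∫_{ν₀}^{ν} f'/(f-g)) = fg(f-g). -/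
theorem stmt17 (f g : ℝ → ℝ) (ν : ℝ → ℝ → ℝ) (u₀ v₀ a b : ℝ)
    (ha : 0 < a) (hb : 0 < b)
    (hf : ContDiff ℝ 2 f) (hg : ContDiff ℝ 2 g)
    (hfg : ∀ t, f t - g t > 0)
    (hf'g' : ∀ t, deriv f t * deriv g t ≠ 0)
    (hν : ContDiff ℝ (⊤ : ℕ∞) (Function.uncurry ν))
    (hνreg : ∀ u v, pd1 ν u v * pd2 ν u v ≠ 0)
    (ν₁ ν₂ : ℝ → ℝ → ℝ)
    (hν₁ : ∀ u v, ν₁ u v = f (ν u v)) (hν₂ : ∀ u v, ν₂ u v = g (ν u v))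
    (Ψ₁ Ψ₂ : ℝ → ℝ → ℝ)
    (hΨ₁ : ∀ u v, Ψ₁ u v = Real.exp
      (-(∫ t in v₀..v, pd2 ν₁ u t / (ν₁ u t - ν₂ u t)) -
        ∫ s in u₀..u, pd1 ν₁ s v₀ / (ν₁ s v₀ - ν₂ s v₀)))
    (hΨ₂ : ∀ u v, Ψ₂ u v = Real.exp
      ((∫ s in u₀..u, pd1 ν₂ s v / (ν₁ s v - ν₂ s v)) +
        ∫ t in v₀..v, pd2 ν₂ u₀ t / (ν₁ u₀ t - ν₂ u₀ t))) :
    ∃ A B : ℝ, 0 < A ∧ 0 < B ∧ ∀ u v,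
      ((ν₁ u v * ν₂ u v * Ψ₁ u v * Ψ₂ u v =
          (1 / b) * pd2 (fun p q => pd2 ν₁ p q / (ν₁ p q - ν₂ p q) * (Ψ₁ p q / Ψ₂ p q)) u v -
          (1 / a) * pd1 (fun p q => pd1 ν₂ p q / (ν₁ p q - ν₂ p q) * (Ψ₂ p q / Ψ₁ p q)) u v) ↔
        A * (deriv f (ν u v) * pd2 (pd2 ν) u v +
              (deriv (deriv f) (ν u v) -
                2 * (deriv f (ν u v)) ^ 2 / (f (ν u v) - g (ν u v))) * (pd2 ν u v) ^ 2) *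
            Real.exp (2 * ∫ t in ν u₀ v₀..ν u v, deriv g t / (g t - f t)) -
          B * (deriv g (ν u v) * pd1 (pd1 ν) u v +
              (deriv (deriv g) (ν u v) +
                2 * (deriv g (ν u v)) ^ 2 / (f (ν u v) - g (ν u v))) * (pd1 ν u v) ^ 2) *
            Real.exp (2 * ∫ t in ν u₀ v₀..ν u v, deriv f t / (f t - g t)) =
          f (ν u v) * g (ν u v) * (f (ν u v) - g (ν u v))) := by
  have hν' : ContDiff ℝ ∞ (Function.uncurry ν) := hν.of_le (by simp)
  have hφne : ∀ t, f t - g t ≠ 0 := fun t => ne_of_gt (hfg t)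
  have hfdiff : Differentiable ℝ f := hf.differentiable (by norm_num)
  have hgdiff : Differentiable ℝ g := hg.differentiable (by norm_num)
  have hf1 : ContDiff ℝ 1 (deriv f) := by
    have h2 : ContDiff ℝ (1 + 1 : ℕ) f := by exact_mod_cast hf
    exact (contDiff_succ_iff_deriv.mp (by exact_mod_cast h2)).2.2
  have hg1 : ContDiff ℝ 1 (deriv g) := by
    have h2 : ContDiff ℝ (1 + 1 : ℕ) g := by exact_mod_cast hg
    exact (contDiff_succ_iff_deriv.mp (by exact_mod_cast h2)).2.2
  have hf'c : Continuous (deriv f) := hf1.continuous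
  have hg'c : Continuous (deriv g) := hg1.continuous
  have hf'd : Differentiable ℝ (deriv f) := hf1.differentiable (by norm_num)
  have hg'd : Differentiable ℝ (deriv g) := hg1.differentiable (by norm_num)
  set F : ℝ → ℝ := fun y => ∫ t in ν u₀ v₀..y, deriv f t / (f t - g t) with hFdef
  set G : ℝ → ℝ := fun y => ∫ t in ν u₀ v₀..y, deriv g t / (f t - g t) with hGdef
  have hφcF : Continuous fun y => deriv f y / (f y - g y) :=
    hf'c.div (hfdiff.continuous.sub hgdiff.continuous) hφne
  have hφcG : Continuous fun y => deriv g y / (f y - g y) :=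
    hg'c.div (hfdiff.continuous.sub hgdiff.continuous) hφne
  have hFder : ∀ y, HasDerivAt F (deriv f y / (f y - g y)) y := fun y => ftc1' hφcF _ y
  have hGder : ∀ y, HasDerivAt G (deriv g y / (f y - g y)) y := fun y => ftc1' hφcG _ y
  have k2f : ∀ u t, pd2 ν₁ u t = deriv f (ν u t) * pd2 ν u t := pd2_comp hfdiff hν' hν₁
  have k2g : ∀ u t, pd2 ν₂ u t = deriv g (ν u t) * pd2 ν u t := pd2_comp hgdiff hν' hν₂
  have k1f : ∀ s v, pd1 ν₁ s v = deriv f (ν s v) * pd1 ν s v := pd1_comp hfdiff hν' hν₁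
  have k1g : ∀ s v, pd1 ν₂ s v = deriv g (ν s v) * pd1 ν s v := pd1_comp hgdiff hν' hν₂
  have hde : ∀ x y, ν₁ x y - ν₂ x y = f (ν x y) - g (ν x y) := fun x y => by
    rw [hν₁, hν₂]
  -- integral identities
  have IvF : ∀ u v, (∫ t in v₀..v, pd2 ν₁ u t / (ν₁ u t - ν₂ u t))
      = F (ν u v) - F (ν u v₀) := by
    intro u v
    have h := keyint' hFder hφcF (sec2_smooth hν' u) v₀ v
    rw [← h]
    refine intervalIntegral.integral_congr fun t _ => ?_
    rw [k2f, hde]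
    simp only [pd2]
    ring
  have IvG : ∀ u v, (∫ t in v₀..v, pd2 ν₂ u t / (ν₁ u t - ν₂ u t))
      = G (ν u v) - G (ν u v₀) := by
    intro u v
    have h := keyint' hGder hφcG (sec2_smooth hν' u) v₀ v
    rw [← h]
    refine intervalIntegral.integral_congr fun t _ => ?_
    rw [k2g, hde]
    simp only [pd2]
    ring
  have IuF : ∀ v u, (∫ s in u₀..u, pd1 ν₁ s v / (ν₁ s v - ν₂ s v))
      = F (ν u v) - F (ν u₀ v) := by
    intro v u
    have h := keyint' hFder hφcF (sec1_smooth hν' v) u₀ u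
    rw [← h]
    refine intervalIntegral.integral_congr fun s _ => ?_
    rw [k1f, hde]
    simp only [pd1]
    ring
  have IuG : ∀ v u, (∫ s in u₀..u, pd1 ν₂ s v / (ν₁ s v - ν₂ s v))
      = G (ν u v) - G (ν u₀ v) := by
    intro v u
    have h := keyint' hGder hφcG (sec1_smooth hν' v) u₀ u
    rw [← h]
    refine intervalIntegral.integral_congr fun s _ => ?_
    rw [k1g, hde]
    simp only [pd1]
    ring
  have hF0 : F (ν u₀ v₀) = 0 := intervalIntegral.integral_same
  have hG0 : G (ν u₀ v₀) = 0 := intervalIntegral.integral_same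
  have ΨF : ∀ u v, Ψ₁ u v = Real.exp (-F (ν u v)) := by
    intro u v
    rw [hΨ₁, IvF u v, IuF v₀ u]
    congr 1
    rw [hF0]
    ring
  have ΨG : ∀ u v, Ψ₂ u v = Real.exp (G (ν u v)) := by
    intro u v
    rw [hΨ₂, IuG v u, IvG u₀ v]
    congr 1
    rw [hG0]
    ring
  refine ⟨1 / b, 1 / a, by positivity, by positivity, fun u v => ?_⟩
  -- section derivative facts at the point (u, v)
  have hcd : Differentiable ℝ (fun y => ν u y) := (sec2_smooth hν' u).differentiable (by norm_num)
  have hcd2 : Differentiable ℝ (deriv (fun y => ν u y)) :=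
    ((contDiff_infty_iff_deriv.mp (sec2_smooth hν' u)).2).differentiable (by norm_num)
  have hdd : Differentiable ℝ (fun x => ν x v) := (sec1_smooth hν' v).differentiable (by norm_num)
  have hdd2 : Differentiable ℝ (deriv (fun x => ν x v)) :=
    ((contDiff_infty_iff_deriv.mp (sec1_smooth hν' v)).2).differentiable (by norm_num)
  have hc : HasDerivAt (fun y => ν u y) (pd2 ν u v) v := (hcd v).hasDerivAt
  have hc2 : HasDerivAt (deriv (fun y => ν u y)) (pd2 (pd2 ν) u v) v := (hcd2 v).hasDerivAt
  have hd : HasDerivAt (fun x => ν x v) (pd1 ν u v) u := (hdd u).hasDerivAt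
  have hd2 : HasDerivAt (deriv (fun x => ν x v)) (pd1 (pd1 ν) u v) u := (hdd2 u).hasDerivAt
  -- D1 : the v-derivative in the Gauss equation
  have h1 : HasDerivAt (fun q => deriv f (ν u q)) (deriv (deriv f) (ν u v) * pd2 ν u v) v :=
    (hf'd _).hasDerivAt.comp v hc
  have hnum : HasDerivAt (fun q => deriv f (ν u q) * pd2 ν u q)
      (deriv (deriv f) (ν u v) * pd2 ν u v * pd2 ν u v +
        deriv f (ν u v) * pd2 (pd2 ν) u v) v := h1.mul hc2
  have hden : HasDerivAt (fun q => f (ν u q) - g (ν u q))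
      (deriv f (ν u v) * pd2 ν u v - deriv g (ν u v) * pd2 ν u v) v :=
    ((hfdiff _).hasDerivAt.comp v hc).sub ((hgdiff _).hasDerivAt.comp v hc)
  have hdiv : HasDerivAt (fun q => deriv f (ν u q) * pd2 ν u q / (f (ν u q) - g (ν u q)))
      (((deriv (deriv f) (ν u v) * pd2 ν u v * pd2 ν u v +
          deriv f (ν u v) * pd2 (pd2 ν) u v) * (f (ν u v) - g (ν u v)) -
        deriv f (ν u v) * pd2 ν u v *
          (deriv f (ν u v) * pd2 ν u v - deriv g (ν u v) * pd2 ν u v)) /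
        (f (ν u v) - g (ν u v)) ^ 2) v := hnum.div hden (hφne _)
  have hFG : HasDerivAt (fun q => -F (ν u q) - G (ν u q))
      (-(deriv f (ν u v) / (f (ν u v) - g (ν u v)) * pd2 ν u v) -
        deriv g (ν u v) / (f (ν u v) - g (ν u v)) * pd2 ν u v) v :=
    (((hFder _).comp v hc).neg).sub ((hGder _).comp v hc)
  have hexp : HasDerivAt (fun q => Real.exp (-F (ν u q) - G (ν u q)))
      (Real.exp (-F (ν u v) - G (ν u v)) *
        (-(deriv f (ν u v) / (f (ν u v) - g (ν u v)) * pd2 ν u v) -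
          deriv g (ν u v) / (f (ν u v) - g (ν u v)) * pd2 ν u v)) v := hFG.exp
  have hval := hdiv.fun_mul hexp
  have D1 : pd2 (fun p q => pd2 ν₁ p q / (ν₁ p q - ν₂ p q) * (Ψ₁ p q / Ψ₂ p q)) u v =
      (deriv f (ν u v) * pd2 (pd2 ν) u v +
        (deriv (deriv f) (ν u v) -
          2 * (deriv f (ν u v)) ^ 2 / (f (ν u v) - g (ν u v))) * (pd2 ν u v) ^ 2) /
        (f (ν u v) - g (ν u v)) * Real.exp (-F (ν u v) - G (ν u v)) := by
    have hfun : (fun q => pd2 ν₁ u q / (ν₁ u q - ν₂ u q) * (Ψ₁ u q / Ψ₂ u q)) =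
        (fun q => deriv f (ν u q) * pd2 ν u q / (f (ν u q) - g (ν u q)) *
          Real.exp (-F (ν u q) - G (ν u q))) := by
      funext q
      rw [k2f, hde, ΨF, ΨG, ← Real.exp_sub]
    show deriv (fun q => pd2 ν₁ u q / (ν₁ u q - ν₂ u q) * (Ψ₁ u q / Ψ₂ u q)) v = _
    rw [hfun, hval.deriv]
    field_simp [hφne (ν u v)]
    ring
  -- D2 : the u-derivative in the Gauss equation
  have h1g : HasDerivAt (fun p => deriv g (ν p v)) (deriv (deriv g) (ν u v) * pd1 ν u v) u :=
    (hg'd _).hasDerivAt.comp u hd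
  have hnum2 : HasDerivAt (fun p => deriv g (ν p v) * pd1 ν p v)
      (deriv (deriv g) (ν u v) * pd1 ν u v * pd1 ν u v +
        deriv g (ν u v) * pd1 (pd1 ν) u v) u := h1g.mul hd2
  have hden2 : HasDerivAt (fun p => f (ν p v) - g (ν p v))
      (deriv f (ν u v) * pd1 ν u v - deriv g (ν u v) * pd1 ν u v) u :=
    ((hfdiff _).hasDerivAt.comp u hd).sub ((hgdiff _).hasDerivAt.comp u hd)
  have hdiv2 := hnum2.fun_div hden2 (hφne (ν u v))
  have hGF : HasDerivAt (fun p => G (ν p v) + F (ν p v))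
      (deriv g (ν u v) / (f (ν u v) - g (ν u v)) * pd1 ν u v +
        deriv f (ν u v) / (f (ν u v) - g (ν u v)) * pd1 ν u v) u :=
    ((hGder _).comp u hd).add ((hFder _).comp u hd)
  have hexp2 := hGF.exp
  have hval2 := hdiv2.fun_mul hexp2
  have D2 : pd1 (fun p q => pd1 ν₂ p q / (ν₁ p q - ν₂ p q) * (Ψ₂ p q / Ψ₁ p q)) u v =
      (deriv g (ν u v) * pd1 (pd1 ν) u v +
        (deriv (deriv g) (ν u v) +
          2 * (deriv g (ν u v)) ^ 2 / (f (ν u v) - g (ν u v))) * (pd1 ν u v) ^ 2) /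
        (f (ν u v) - g (ν u v)) * Real.exp (G (ν u v) + F (ν u v)) := by
    have hfun2 : (fun p => pd1 ν₂ p v / (ν₁ p v - ν₂ p v) * (Ψ₂ p v / Ψ₁ p v)) =
        (fun p => deriv g (ν p v) * pd1 ν p v / (f (ν p v) - g (ν p v)) *
          Real.exp (G (ν p v) + F (ν p v))) := by
      funext p
      rw [k1g, hde, ΨF, ΨG, ← Real.exp_sub, sub_neg_eq_add]
    show deriv (fun p => pd1 ν₂ p v / (ν₁ p v - ν₂ p v) * (Ψ₂ p v / Ψ₁ p v)) u = _
    rw [hfun2, hval2.deriv]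
    field_simp [hφne (ν u v)]
    ring
  have eG : (∫ t in ν u₀ v₀..ν u v, deriv g t / (g t - f t)) = -G (ν u v) := by
    have h : ∀ t : ℝ, deriv g t / (g t - f t) = -(deriv g t / (f t - g t)) := fun t => by
      rw [show g t - f t = -(f t - g t) by ring, div_neg]
    simp only [h]
    rw [intervalIntegral.integral_neg]
  have eF : (∫ t in ν u₀ v₀..ν u v, deriv f t / (f t - g t)) = F (ν u v) := rfl
  rw [hν₁ u v, hν₂ u v, ΨF u v, ΨG u v, D1, D2, eG, eF]
  rw [show Real.exp (-F (ν u v) - G (ν u v)) =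
      (Real.exp (F (ν u v)))⁻¹ * (Real.exp (G (ν u v)))⁻¹ from by
    rw [sub_eq_add_neg, Real.exp_add, Real.exp_neg, Real.exp_neg]]
  rw [Real.exp_add (G (ν u v)) (F (ν u v))]
  rw [show Real.exp (2 * -G (ν u v)) =
      (Real.exp (G (ν u v)))⁻¹ * (Real.exp (G (ν u v)))⁻¹ from by
    rw [two_mul, Real.exp_add, Real.exp_neg]]
  rw [show Real.exp (2 * F (ν u v)) = Real.exp (F (ν u v)) * Real.exp (F (ν u v)) from by
    rw [two_mul, Real.exp_add]]
  rw [Real.exp_neg (F (ν u v))]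
  have hEPpos : 0 < Real.exp (F (ν u v)) := Real.exp_pos _
  have hEQpos : 0 < Real.exp (G (ν u v)) := Real.exp_pos _
  set x1 := f (ν u v) with hx1
  set x2 := g (ν u v) with hx2
  set pp := deriv f (ν u v) with hpp
  set qq := deriv g (ν u v) with hqq
  set pp2 := deriv (deriv f) (ν u v) with hpp2
  set qq2 := deriv (deriv g) (ν u v) with hqq2
  set n1 := pd1 ν u v with hn1
  set n2 := pd2 ν u v with hn2
  set m1 := pd1 (pd1 ν) u v with hm1
  set m2 := pd2 (pd2 ν) u v with hm2
  set EP := Real.exp (F (ν u v)) with hEPd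
  set EQ := Real.exp (G (ν u v)) with hEQd
  have hx : x1 - x2 ≠ 0 := hφne (ν u v)
  have hEP : EP ≠ 0 := ne_of_gt hEPpos
  have hEQ : EQ ≠ 0 := ne_of_gt hEQpos
  have ha' : a ≠ 0 := ne_of_gt ha
  have hb' : b ≠ 0 := ne_of_gt hb
  clear_value x1 x2 pp qq pp2 qq2 n1 n2 m1 m2 EP EQ
  have key : 1 / b * (pp * m2 + (pp2 - 2 * pp ^ 2 / (x1 - x2)) * n2 ^ 2) * (EQ⁻¹ * EQ⁻¹) -
        1 / a * (qq * m1 + (qq2 + 2 * qq ^ 2 / (x1 - x2)) * n1 ^ 2) * (EP * EP) -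
        x1 * x2 * (x1 - x2) =
      (x1 - x2) * EP / EQ *
        ((1 / b * ((pp * m2 + (pp2 - 2 * pp ^ 2 / (x1 - x2)) * n2 ^ 2) / (x1 - x2) *
            (EP⁻¹ * EQ⁻¹)) -
          1 / a * ((qq * m1 + (qq2 + 2 * qq ^ 2 / (x1 - x2)) * n1 ^ 2) / (x1 - x2) *
            (EQ * EP))) - x1 * x2 * EP⁻¹ * EQ) :=
    key_alg a b x1 x2 pp qq pp2 qq2 n1 n2 m1 m2 EP EQ hx hEP hEQ ha' hb'
  have hk : (x1 - x2) * EP / EQ ≠ 0 := div_ne_zero (mul_ne_zero hx hEP) hEQ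
  constructor
  · intro h
    have h0 : (x1 - x2) * EP / EQ *
        ((1 / b * ((pp * m2 + (pp2 - 2 * pp ^ 2 / (x1 - x2)) * n2 ^ 2) / (x1 - x2) *
            (EP⁻¹ * EQ⁻¹)) -
          1 / a * ((qq * m1 + (qq2 + 2 * qq ^ 2 / (x1 - x2)) * n1 ^ 2) / (x1 - x2) *
            (EQ * EP))) - x1 * x2 * EP⁻¹ * EQ) = 0 := by
      rw [← h]
      ring
    have h1 := key.trans h0
    linarith [h1]
  · intro h
    have h1 : (x1 - x2) * EP / EQ *
        ((1 / b * ((pp * m2 + (pp2 - 2 * pp ^ 2 / (x1 - x2)) * n2 ^ 2) / (x1 - x2) *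
            (EP⁻¹ * EQ⁻¹)) -
          1 / a * ((qq * m1 + (qq2 + 2 * qq ^ 2 / (x1 - x2)) * n1 ^ 2) / (x1 - x2) *
            (EQ * EP))) - x1 * x2 * EP⁻¹ * EQ) = 0 := by
      rw [← key, h]
      ring
    have h2 := (mul_eq_zero.mp h1).resolve_left hk
    linarith [h2]
end
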